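/- If C is the collision count of k i.i.d. uniform samples from a set of size m and k ≥ (10/ε)·√m for ε ∈ (0,1/2), then with probability at least 2/3, C > 0 and the estimator binom(k,2)/C lies in [(1−2ε)m, (1+2ε)m]. -/

import Mathlib

/-!
For `i < j` let `A_{ij}` be the event `X_i = X_j`; it has probability `1/m`. Two distinct events
`A_{ab}`, `A_{cd}` are independent: some index `b` of the first pair is not in the second, and
`A_{ab} ∩ A_{cd}` is the event that the pair `(X_b, X_c)` (or `(X_b, X_d)` if `c = a`), which is
uniform on `S × S`, equals an independent pair, so it has probability `1/m²`. Pairwise independence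
gives `Var C ≤ E C = binom(k,2)/m`, and Chebyshev's inequality gives `|C - E C| < ε E C` outside
an event of probability at most `1/(ε² E C)`, which is at most `1/3` because `k ≥ (10/ε)√m`
forces `ε² E C ≥ 3`. Off that event `C > 0`, and since
`(1 + ε)⁻¹ ≥ 1 - 2ε` and `(1 - ε)⁻¹ ≤ 1 + 2ε` for `0 < ε ≤ 1/2`, the estimator `binom(k,2)/C`
lies within a factor `1 ± 2ε` of `m = binom(k,2)/E C`.
-/

open MeasureTheory ProbabilityTheory Finset

/-- The number of pairwise collisions among `X₁,…,X_k`. -/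
noncomputable def collisionCount {Ω S : Type*} [DecidableEq S] (k : ℕ)
    (X : Fin k → Ω → S) (ω : Ω) : ℝ :=
  ∑ p ∈ Finset.univ.filter (fun p : Fin k × Fin k => p.1 < p.2),
    (if X p.1 ω = X p.2 ω then (1 : ℝ) else 0)

open scoped ENNReal

theorem div_mem_Icc_of_abs_sub_div_lt {a b x ε : ℝ} (hb : 0 < b) (hε₀ : 0 ≤ ε)
    (hε : ε ≤ 1 / 2) (h : |x - a / b| < ε * (a / b)) :
    0 < x ∧ a / x ∈ Set.Icc ((1 - 2 * ε) * b) ((1 + 2 * ε) * b) := by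
  have hεab : 0 < ε * (a / b) := (abs_nonneg _).trans_lt h
  have hab : 0 < a / b := pos_of_mul_pos_right hεab hε₀
  have ha : 0 < a := (div_pos_iff_of_pos_right hb).1 hab
  have hε0 : 0 < ε := pos_of_mul_pos_left hεab hab.le
  obtain ⟨hlo, hhi⟩ := abs_lt.1 h
  have hx : 0 < x := by nlinarith
  have hbx : (1 - ε) * a < b * x := by
    have := mul_lt_mul_of_pos_left (show (1 - ε) * (a / b) < x by linarith) hb
    rwa [mul_left_comm, mul_div_cancel₀ _ hb.ne'] at this
  have hbx' : b * x < (1 + ε) * a := by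
    have := mul_lt_mul_of_pos_left (show x < (1 + ε) * (a / b) by linarith) hb
    rwa [mul_left_comm b, mul_div_cancel₀ _ hb.ne'] at this
  refine ⟨hx, ?_, ?_⟩
  · rw [le_div_iff₀ hx]
    nlinarith
  · rw [div_le_iff₀ hx]
    nlinarith

theorem three_le_sq_mul_choose_two_div {m k : ℕ} {ε : ℝ} (hm : 1 ≤ m) (hε0 : 0 < ε)
    (hε1 : ε < 1 / 2) (hk : (10 / ε) * Real.sqrt m ≤ k) :
    3 ≤ ε ^ 2 * ((k.choose 2 : ℝ) / m) := by
  have hm' : (1 : ℝ) ≤ m := by exact_mod_cast hm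
  have hsqrt : 1 ≤ Real.sqrt m := Real.one_le_sqrt.2 hm'
  have hεk : 10 * Real.sqrt m ≤ ε * k := by
    rw [div_mul_eq_mul_div, div_le_iff₀ hε0] at hk
    linarith
  have hk20 : (20 : ℝ) ≤ k := by nlinarith
  have hsq : 100 * (m : ℝ) ≤ (ε * k) ^ 2 := by
    nlinarith [Real.sq_sqrt (show (0 : ℝ) ≤ m by positivity)]
  rw [Nat.cast_choose_two, mul_div_assoc', le_div_iff₀ (by positivity)]
  nlinarith

theorem collisionCount_eq_sum_indicator {Ω S : Type*} [DecidableEq S] {k : ℕ} (X : Fin k → Ω → S) :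
    collisionCount k X = ∑ p ∈ univ.filter (fun p : Fin k × Fin k => p.1 < p.2),
      {ω | X p.1 ω = X p.2 ω}.indicator 1 := by
  ext ω
  simp [collisionCount, Set.indicator_apply]

section Probability

variable {Ω : Type*} [MeasurableSpace Ω] {μ : Measure Ω}

theorem IndepSet.indepFun_indicator_one {A B : Set Ω} (h : IndepSet A B μ) :
    IndepFun (A.indicator (1 : Ω → ℝ)) (B.indicator (1 : Ω → ℝ)) μ := by
  have hmeas (C : Set Ω) : Measurable[MeasurableSpace.generateFrom {C}] (C.indicator (1 : Ω → ℝ)) :=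
    measurable_const.indicator (MeasurableSpace.measurableSet_generateFrom rfl)
  rw [IndepFun_iff_Indep]
  exact indep_of_indep_of_le h (hmeas A).comap_le (hmeas B).comap_le

theorem measure_prodMk_preimage_singleton {T T' : Type*} [Fintype T] [Fintype T']
    [MeasurableSpace T] [MeasurableSpace T'] [MeasurableSingletonClass T]
    [MeasurableSingletonClass T'] {Y : Ω → T} {Y' : Ω → T'} (hYY' : IndepFun Y Y' μ)
    (hY : ∀ t, μ (Y ⁻¹' {t}) = (Fintype.card T : ℝ≥0∞)⁻¹)
    (hY' : ∀ t, μ (Y' ⁻¹' {t}) = (Fintype.card T' : ℝ≥0∞)⁻¹) (t : T × T') :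
    μ ((fun ω => (Y ω, Y' ω)) ⁻¹' {t}) = (Fintype.card (T × T') : ℝ≥0∞)⁻¹ := by
  have : (fun ω => (Y ω, Y' ω)) ⁻¹' {t} = Y ⁻¹' {t.1} ∩ Y' ⁻¹' {t.2} := by
    ext ω; simp [Prod.ext_iff]
  rw [this, hYY'.measure_inter_preimage_eq_mul _ _ (measurableSet_singleton _)
    (measurableSet_singleton _), hY, hY', Fintype.card_prod, Nat.cast_mul,
    ENNReal.mul_inv (by simp) (by simp)]

variable [IsProbabilityMeasure μ]

theorem variance_sum_indicator_le {ι : Type*} (s : Finset ι) {A : ι → Set Ω}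
    (hA : ∀ i, MeasurableSet (A i)) (h : Set.Pairwise s fun i j => IndepSet (A i) (A j) μ) :
    variance (∑ i ∈ s, (A i).indicator (1 : Ω → ℝ)) μ ≤ ∑ i ∈ s, μ.real (A i) := by
  have hL2 : ∀ i ∈ s, MemLp ((A i).indicator (1 : Ω → ℝ)) 2 μ := fun i _ =>
    memLp_indicator_const 2 (hA i) 1 (Or.inr (measure_ne_top _ _))
  rw [IndepFun.variance_sum hL2 fun i hi j hj hij =>
    IndepSet.indepFun_indicator_one (h hi hj hij)]
  refine Finset.sum_le_sum fun i _ => ?_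
  calc variance ((A i).indicator 1) μ ≤ μ[(A i).indicator 1 ^ 2] :=
        variance_le_expectation_sq (measurable_one.indicator (hA i)).aestronglyMeasurable
    _ = μ.real (A i) := by
        rw [← integral_indicator_one (hA i)]
        congr 1
        ext ω
        by_cases hω : ω ∈ A i <;> simp [hω]

theorem measureReal_abs_sub_integral_ge_le {X : Ω → ℝ} (hX : MemLp X 2 μ) (hpos : 0 < μ[X])
    (hvar : variance X μ ≤ μ[X]) {c : ℝ} (hc : 0 < c) :
    μ.real {ω | c * μ[X] ≤ |X ω - μ[X]|} ≤ (c ^ 2 * μ[X])⁻¹ := by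
  refine ENNReal.toReal_le_of_le_ofReal (by positivity)
    ((meas_ge_le_variance_div_sq hX (mul_pos hc hpos)).trans (ENNReal.ofReal_le_ofReal ?_))
  calc variance X μ / (c * μ[X]) ^ 2 ≤ μ[X] / (c * μ[X]) ^ 2 := by gcongr
    _ = (c ^ 2 * μ[X])⁻¹ := by field_simp

theorem measure_eq_eq_inv_card_of_indepFun {T : Type*} [Fintype T] [MeasurableSpace T]
    [MeasurableSingletonClass T] {Y Z : Ω → T} (hY : Measurable Y) (hZ : Measurable Z)
    (hYZ : IndepFun Y Z μ) (hunif : ∀ t, μ (Y ⁻¹' {t}) = (Fintype.card T : ℝ≥0∞)⁻¹) :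
    μ {ω | Y ω = Z ω} = (Fintype.card T : ℝ≥0∞)⁻¹ := by
  have hdiag : {ω | Y ω = Z ω} = ⋃ t, Y ⁻¹' {t} ∩ Z ⁻¹' {t} := by
    ext ω; simp [eq_comm]
  rw [hdiag, measure_iUnion, tsum_fintype]
  · simp_rw [hYZ.measure_inter_preimage_eq_mul _ _ (measurableSet_singleton _)
      (measurableSet_singleton _), hunif, ← Finset.mul_sum]
    rw [sum_measure_preimage_singleton _ fun t _ => hZ (measurableSet_singleton t)]
    simp
  · intro s t hst
    exact Disjoint.mono Set.inter_subset_left Set.inter_subset_left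
      ((Set.disjoint_singleton.2 hst).preimage Y)
  · exact fun t => (hY (measurableSet_singleton t)).inter (hZ (measurableSet_singleton t))

section Collisions

variable {ι S : Type*} [Fintype S] [MeasurableSpace S] [MeasurableSingletonClass S]
  {X : ι → Ω → S}

theorem measure_collision (hmeas : ∀ i, Measurable (X i)) (hindep : iIndepFun X μ)
    (hunif : ∀ i s, μ (X i ⁻¹' {s}) = (Fintype.card S : ℝ≥0∞)⁻¹) {i j : ι} (hij : i ≠ j) :
    μ {ω | X i ω = X j ω} = (Fintype.card S : ℝ≥0∞)⁻¹ :=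
  measure_eq_eq_inv_card_of_indepFun (hmeas i) (hmeas j) (hindep.indepFun hij) (hunif i)

theorem measure_prodMk_eq_prodMk (hmeas : ∀ i, Measurable (X i)) (hindep : iIndepFun X μ)
    (hunif : ∀ i s, μ (X i ⁻¹' {s}) = (Fintype.card S : ℝ≥0∞)⁻¹) {i j u v : ι} (hij : i ≠ j)
    (hiu : i ≠ u) (hiv : i ≠ v) (hju : j ≠ u) (hjv : j ≠ v) :
    μ {ω | (X i ω, X j ω) = (X u ω, X v ω)} = (Fintype.card S : ℝ≥0∞)⁻¹ ^ 2 := by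
  rw [measure_eq_eq_inv_card_of_indepFun ((hmeas i).prodMk (hmeas j))
    ((hmeas u).prodMk (hmeas v)) (hindep.indepFun_prodMk_prodMk hmeas i j u v hiu hiv hju hjv)
    (measure_prodMk_preimage_singleton (hindep.indepFun hij) (hunif i) (hunif j)),
    Fintype.card_prod, Nat.cast_mul, ENNReal.mul_inv (by simp) (by simp), sq]

theorem measure_collision_inter_collision (hmeas : ∀ i, Measurable (X i))
    (hindep : iIndepFun X μ) (hunif : ∀ i s, μ (X i ⁻¹' {s}) = (Fintype.card S : ℝ≥0∞)⁻¹)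
    {a b c d : ι} (hab : a ≠ b) (hcd : c ≠ d) (hbc : b ≠ c) (hbd : b ≠ d) :
    μ ({ω | X a ω = X b ω} ∩ {ω | X c ω = X d ω}) = (Fintype.card S : ℝ≥0∞)⁻¹ ^ 2 := by
  by_cases hca : c = a
  · subst hca
    have : {ω | X c ω = X b ω} ∩ {ω | X c ω = X d ω} = {ω | (X b ω, X d ω) = (X c ω, X c ω)} := by
      ext ω; simp [eq_comm]
    rw [this]
    exact measure_prodMk_eq_prodMk hmeas hindep hunif hbd hab.symm hab.symm hcd.symm hcd.symm
  · have : {ω | X a ω = X b ω} ∩ {ω | X c ω = X d ω} = {ω | (X b ω, X c ω) = (X a ω, X d ω)} := by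
      ext ω; simp [eq_comm]
    rw [this]
    exact measure_prodMk_eq_prodMk hmeas hindep hunif hbc hab.symm hbd hca hcd

end Collisions

section CollisionCount

variable {S : Type*} [Fintype S] [MeasurableSpace S] [MeasurableSingletonClass S]
  {k : ℕ} {X : Fin k → Ω → S}

theorem indepSet_collision (hmeas : ∀ i, Measurable (X i)) (hindep : iIndepFun X μ)
    (hunif : ∀ i s, μ (X i ⁻¹' {s}) = (Fintype.card S : ℝ≥0∞)⁻¹) {p q : Fin k × Fin k}
    (hp : p.1 < p.2) (hq : q.1 < q.2) (hpq : p ≠ q) :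
    IndepSet {ω | X p.1 ω = X p.2 ω} {ω | X q.1 ω = X q.2 ω} μ := by
  have hA (i j : Fin k) : MeasurableSet {ω | X i ω = X j ω} :=
    measurableSet_eq_fun (hmeas i) (hmeas j)
  rw [indepSet_iff_measure_inter_eq_mul (hA _ _) (hA _ _) μ,
    measure_collision hmeas hindep hunif hp.ne, measure_collision hmeas hindep hunif hq.ne, ← sq]
  rw [Ne, Prod.ext_iff] at hpq
  by_cases h2 : p.2 ≠ q.1 ∧ p.2 ≠ q.2
  · exact measure_collision_inter_collision hmeas hindep hunif hp.ne hq.ne h2.1 h2.2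
  · have hcomm : {ω | X p.1 ω = X p.2 ω} = {ω | X p.2 ω = X p.1 ω} := by
      ext ω; exact eq_comm
    rw [hcomm]
    exact measure_collision_inter_collision hmeas hindep hunif hp.ne' hq.ne (by omega) (by omega)

theorem sum_measureReal_collision (hmeas : ∀ i, Measurable (X i)) (hindep : iIndepFun X μ)
    (hunif : ∀ i s, μ (X i ⁻¹' {s}) = (Fintype.card S : ℝ≥0∞)⁻¹) :
    ∑ p ∈ univ.filter (fun p : Fin k × Fin k => p.1 < p.2), μ.real {ω | X p.1 ω = X p.2 ω}
      = (k.choose 2 : ℝ) / Fintype.card S := by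
  have hcard : #(univ.filter fun p : Fin k × Fin k => p.1 < p.2) = k.choose 2 := by
    simpa using card_product_filter_lt (s := (univ : Finset (Fin k)))
  rw [Finset.sum_congr rfl fun p hp => by
    rw [measureReal_def, measure_collision hmeas hindep hunif (mem_filter.1 hp).2.ne],
    sum_const, hcard, nsmul_eq_mul, ENNReal.toReal_inv, ENNReal.toReal_natCast, div_eq_mul_inv]

variable [DecidableEq S]

theorem integral_collisionCount (hmeas : ∀ i, Measurable (X i)) (hindep : iIndepFun X μ)
    (hunif : ∀ i s, μ (X i ⁻¹' {s}) = (Fintype.card S : ℝ≥0∞)⁻¹) :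
    μ[collisionCount k X] = (k.choose 2 : ℝ) / Fintype.card S := by
  have hA (p : Fin k × Fin k) : MeasurableSet {ω | X p.1 ω = X p.2 ω} :=
    measurableSet_eq_fun (hmeas _) (hmeas _)
  simp_rw [collisionCount_eq_sum_indicator, Finset.sum_apply]
  rw [integral_finsetSum _ fun p _ =>
    (integrable_const 1).indicator (hA p), ← sum_measureReal_collision hmeas hindep hunif]
  exact Finset.sum_congr rfl fun p _ => integral_indicator_one (hA p)

theorem variance_collisionCount_le (hmeas : ∀ i, Measurable (X i)) (hindep : iIndepFun X μ)
    (hunif : ∀ i s, μ (X i ⁻¹' {s}) = (Fintype.card S : ℝ≥0∞)⁻¹) :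
    variance (collisionCount k X) μ ≤ (k.choose 2 : ℝ) / Fintype.card S := by
  rw [collisionCount_eq_sum_indicator, ← sum_measureReal_collision hmeas hindep hunif]
  exact variance_sum_indicator_le _ (fun p => measurableSet_eq_fun (hmeas _) (hmeas _))
    fun p hp q hq hpq => indepSet_collision hmeas hindep hunif (mem_filter.1 hp).2
      (mem_filter.1 hq).2 hpq

theorem memLp_collisionCount (hmeas : ∀ i, Measurable (X i)) : MemLp (collisionCount k X) 2 μ := by
  rw [collisionCount_eq_sum_indicator]
  exact memLp_finsetSum' _ fun p _ => memLp_indicator_const 2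
    (measurableSet_eq_fun (hmeas _) (hmeas _)) 1 (Or.inr (measure_ne_top _ _))

end CollisionCount

end Probability

/-- If `C` is the collision count of `k` i.i.d. uniform samples from a set of
size `m` and `k ≥ (10/ε)·√m` for `ε ∈ (0,1/2)`, then with probability at least
`2/3`, `C > 0` and the estimator `binom(k,2)/C` lies in `[(1−2ε)m, (1+2ε)m]`. -/
theorem stmt12 {Ω : Type*} [MeasureSpace Ω] [IsProbabilityMeasure (ℙ : Measure Ω)]
    {S : Type*} [Fintype S] [DecidableEq S] [MeasurableSpace S]
    [MeasurableSingletonClass S]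
    (m k : ℕ) (hmS : Fintype.card S = m) (hm : 1 ≤ m)
    (ε : ℝ) (hε0 : 0 < ε) (hε1 : ε < 1 / 2)
    (hk : (k : ℝ) ≥ (10 / ε) * Real.sqrt m)
    (X : Fin k → Ω → S) (hmeas : ∀ i, Measurable (X i))
    (hindep : iIndepFun X ℙ)
    (hunif : ∀ (i : Fin k) (s : S), (ℙ {ω | X i ω = s}).toReal = 1 / m) :
    (2 : ℝ) / 3 ≤
      (ℙ {ω | 0 < collisionCount k X ω ∧
        (1 - 2 * ε) * m ≤ (k.choose 2 : ℝ) / collisionCount k X ω ∧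
        (k.choose 2 : ℝ) / collisionCount k X ω ≤ (1 + 2 * ε) * m}).toReal := by
  set C := collisionCount k X
  have hunif' (i : Fin k) (s : S) : ℙ (X i ⁻¹' {s}) = (Fintype.card S : ℝ≥0∞)⁻¹ := by
    rw [← ENNReal.ofReal_toReal (measure_ne_top ℙ _), show X i ⁻¹' {s} = {ω | X i ω = s} from rfl,
      hunif, hmS, one_div, ENNReal.ofReal_inv_of_pos (by positivity), ENNReal.ofReal_natCast]
  have hE : ℙ[C] = (k.choose 2 : ℝ) / m := by
    rw [integral_collisionCount hmeas hindep hunif', hmS]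
  have hvar : variance C ℙ ≤ ℙ[C] := by
    simpa only [hE, hmS] using variance_collisionCount_le hmeas hindep hunif'
  have h3 : 3 ≤ ε ^ 2 * ℙ[C] := hE ▸ three_le_sq_mul_choose_two_div hm hε0 hε1 hk
  have hEpos : 0 < ℙ[C] := by nlinarith
  have hL2 : MemLp C 2 ℙ := memLp_collisionCount hmeas
  have hbad : (ℙ : Measure Ω).real {ω | ε * ℙ[C] ≤ |C ω - ℙ[C]|} ≤ 3⁻¹ :=
    (measureReal_abs_sub_integral_ge_le hL2 hEpos hvar hε0).trans (inv_anti₀ (by norm_num) h3)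
  have hgood : {ω | ε * ℙ[C] ≤ |C ω - ℙ[C]|}ᶜ ⊆ {ω | 0 < C ω ∧
      (1 - 2 * ε) * m ≤ (k.choose 2 : ℝ) / C ω ∧ (k.choose 2 : ℝ) / C ω ≤ (1 + 2 * ε) * m} := by
    intro ω hω
    rw [Set.mem_compl_iff, Set.mem_ofPred_eq, not_le, hE] at hω
    exact div_mem_Icc_of_abs_sub_div_lt (by exact_mod_cast hm) hε0.le hε1.le hω
  calc (2 : ℝ) / 3 ≤ 1 - (ℙ : Measure Ω).real {ω | ε * ℙ[C] ≤ |C ω - ℙ[C]|} := by linarith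
    _ = (ℙ : Measure Ω).real {ω | ε * ℙ[C] ≤ |C ω - ℙ[C]|}ᶜ :=
      (probReal_compl_eq_one_sub₀ (nullMeasurableSet_le aemeasurable_const
        (hL2.aestronglyMeasurable.aemeasurable.sub_const _).abs)).symm
    _ ≤ _ := measureReal_mono hgood
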